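/- arXiv:math/0407433 — 2 statements merged into one kernel-verified Lean document; each statement's English description precedes it below -/
import Mathlib

section
/- Let g : (a,b) → ℝ be a function such that at every t ∈ (a,b) both one-sided derivatives g'₋(t) and g'₊(t) exist (as real numbers). If g'₋(x) ≤ g'₊(x) for every x ∈ (a,b), and g'₊(x) ≤ g'₋(y) whenever x < y in (a,b), then g is convex on (a,b). -/
open Set

/-- If `g` has one-sided derivatives everywhere on `(a,b)`, with the left derivative
bounded by the right derivative at each point, and the right derivative at `x` bounded
by the left derivative at `y` whenever `x < y`, then `g` is convex on `(a,b)`. -/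
theorem lemF4 (a b : ℝ) (g gl gr : ℝ → ℝ)
    (hgl : ∀ t ∈ Set.Ioo a b, HasDerivWithinAt g (gl t) (Set.Iio t) t)
    (hgr : ∀ t ∈ Set.Ioo a b, HasDerivWithinAt g (gr t) (Set.Ioi t) t)
    (h1 : ∀ x ∈ Set.Ioo a b, gl x ≤ gr x)
    (h2 : ∀ x ∈ Set.Ioo a b, ∀ y ∈ Set.Ioo a b, x < y → gr x ≤ gl y) :
    ConvexOn ℝ (Set.Ioo a b) g := by
  -- continuity of g on Ioo a b
  have hcont : ∀ t ∈ Set.Ioo a b, ContinuousAt g t := by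
    intro t ht
    exact continuousAt_iff_continuous_left'_right'.2
      ⟨(hgl t ht).continuousWithinAt, (hgr t ht).continuousWithinAt⟩
  have hIci : ∀ t ∈ Set.Ioo a b, HasDerivWithinAt g (gr t) (Set.Ici t) t := by
    intro t ht
    exact hasDerivWithinAt_Ioi_iff_Ici.1 (hgr t ht)
  have hsub : ∀ {x y : ℝ}, x ∈ Set.Ioo a b → y ∈ Set.Ioo a b → Set.Icc x y ⊆ Set.Ioo a b := by
    intro x y hx hy
    exact Set.Icc_subset_Ioo hx.1 hy.2
  have hcontOn : ∀ {x y : ℝ}, x ∈ Set.Ioo a b → y ∈ Set.Ioo a b →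
      ContinuousOn g (Set.Icc x y) := by
    intro x y hx hy t ht
    exact (hcont t (hsub hx hy ht)).continuousWithinAt
  -- upper bound: for x < y, g y - g x ≤ gl y * (y - x)
  have upper : ∀ {x y : ℝ}, x ∈ Set.Ioo a b → y ∈ Set.Ioo a b → x < y →
      g y ≤ g x + gl y * (y - x) := by
    intro x y hx hy hxy
    have := image_le_of_deriv_right_le_deriv_boundary (f := g) (f' := gr) (a := x) (b := y)
      (hcontOn hx hy)
      (fun t ht => hIci t (hsub hx hy ⟨ht.1, ht.2.le⟩))
      (B := fun t => g x + gl y * (t - x)) (B' := fun _ => gl y)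
      (by simp)
      (by fun_prop)
      (fun t _ => by
        simpa using (((hasDerivWithinAt_id t (Set.Ici t)).sub_const x).const_mul
          (gl y)).const_add (g x))
      (fun t ht => h2 t (hsub hx hy ⟨ht.1, ht.2.le⟩) y hy ht.2)
    simpa using this (Set.right_mem_Icc.2 hxy.le)
  -- lower bound: for y < z, g y + gr y * (z - y) ≤ g z
  have lower : ∀ {y z : ℝ}, y ∈ Set.Ioo a b → z ∈ Set.Ioo a b → y < z →
      g y + gr y * (z - y) ≤ g z := by
    intro y z hy hz hyz
    have := image_le_of_deriv_right_le_deriv_boundary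
      (f := fun t => g y + gr y * (t - y)) (f' := fun _ => gr y) (a := y) (b := z)
      (by fun_prop)
      (fun t _ => by
        simpa using (((hasDerivWithinAt_id t (Set.Ici t)).sub_const y).const_mul
          (gr y)).const_add (g y))
      (B := g) (B' := gr)
      (by simp)
      (hcontOn hy hz)
      (fun t ht => hIci t (hsub hy hz ⟨ht.1, ht.2.le⟩))
      (fun t ht => by
        rcases eq_or_lt_of_le ht.1 with h | h
        · exact h ▸ le_refl (gr y)
        · have ht' := hsub hy hz ⟨ht.1, ht.2.le⟩
          exact (h2 y hy t ht' h).trans (h1 t ht'))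
    exact this (Set.right_mem_Icc.2 hyz.le)
  refine convexOn_of_slope_mono_adjacent (convex_Ioo a b) ?_
  intro x y z hx hz hxy hyz
  have hy : y ∈ Set.Ioo a b := ⟨hx.1.trans hxy, hyz.trans hz.2⟩
  have h1' : (g y - g x) / (y - x) ≤ gl y := by
    rw [div_le_iff₀ (by linarith)]
    have := upper hx hy hxy
    linarith
  have h2' : gr y ≤ (g z - g y) / (z - y) := by
    rw [le_div_iff₀ (by linarith)]
    have := lower hy hz hyz
    linarith
  exact h1'.trans ((h1 y hy).trans h2')
end

section
/- Let g : (a,b) → ℝ have finite one-sided derivatives at every point. If x < z < y are points of (a,b) with g(z) > L(z), where L is the affine function through (x,g(x)) and (y,g(y)), then setting α = (g(z)−g(x))/(z−x) and β = (g(y)−g(z))/(y−z), there exist u ∈ (x,z) with g'₊(u) ≥ α and v ∈ (z,y) with g'₋(v) ≤ β, and moreover α > β. -/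
/-!
Subtracting from `g` the linear function of slope `α` leaves a function `φ` with `φ x = φ z`.
If every right derivative of `φ` on `(x, z)` were negative, `φ` would be antitone, hence constant,
on `[x, z]`, and its right derivatives would vanish. The left-derivative statement on `[z, y]`
follows by reflecting `t ↦ -t`, and `α > β` is the algebraic form of `g z` lying above the chord.
-/

open Set Filter Topology

lemma antitoneOn_Icc_of_hasDerivWithinAt_Ioi_nonpos {f f' : ℝ → ℝ} {p q : ℝ}
    (hf : ContinuousOn f (Icc p q))
    (hf' : ∀ t ∈ Ioo p q, HasDerivWithinAt f (f' t) (Ioi t) t)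
    (hf'_nonpos : ∀ t ∈ Ioo p q, f' t ≤ 0) :
    AntitoneOn f (Icc p q) := by
  intro s hs t ht hst
  rcases hst.eq_or_lt with rfl | hst
  · exact le_rfl
  have h_le_of_gt : ∀ s' ∈ Ioo s t, f t ≤ f s' := by
    intro s' hs'
    have hsub : Ico s' t ⊆ Ioo p q := fun r hr =>
      ⟨hs.1.trans_lt (hs'.1.trans_le hr.1), hr.2.trans_le ht.2⟩
    refine image_le_of_deriv_right_le_deriv_boundary (f' := f') (B := fun _ => f s')
      (B' := fun _ => 0)
      (hf.mono (Icc_subset_Icc (hs.1.trans hs'.1.le) ht.2))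
      (fun r hr => hasDerivWithinAt_Ioi_iff_Ici.1 (hf' r (hsub hr))) le_rfl
      continuousOn_const (fun r _ => hasDerivWithinAt_const r _ (f s'))
      (fun r hr => hf'_nonpos r (hsub hr)) ⟨hs'.2.le, le_rfl⟩
  have hcont : Tendsto f (𝓝[>] s) (𝓝 (f s)) := by
    rw [← nhdsWithin_Ioo_eq_nhdsGT hst]
    exact (hf s hs).mono (Ioo_subset_Icc_self.trans (Icc_subset_Icc hs.1 ht.2))
  refine ge_of_tendsto hcont ?_
  rw [← nhdsWithin_Ioo_eq_nhdsGT hst]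
  filter_upwards [self_mem_nhdsWithin] with s' hs' using h_le_of_gt s' hs'

lemma exists_mem_Ioo_div_le_of_hasDerivWithinAt_Ioi {g g' : ℝ → ℝ} {p q : ℝ} (hpq : p < q)
    (hg : ContinuousOn g (Icc p q))
    (hg' : ∀ t ∈ Ioo p q, HasDerivWithinAt g (g' t) (Ioi t) t) :
    ∃ u ∈ Ioo p q, (g q - g p) / (q - p) ≤ g' u := by
  set α := (g q - g p) / (q - p)
  by_contra! hlt
  set φ : ℝ → ℝ := fun t => g t - α * t
  have hφ' : ∀ t ∈ Ioo p q, HasDerivWithinAt φ (g' t - α) (Ioi t) t := fun t ht =>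
    ((hg' t ht).sub ((hasDerivWithinAt_id t _).const_mul α)).congr_deriv (by rw [mul_one])
  have hanti : AntitoneOn φ (Icc p q) :=
    antitoneOn_Icc_of_hasDerivWithinAt_Ioi_nonpos (hg.sub (continuousOn_const.mul continuousOn_id))
      hφ' fun t ht => (sub_neg.2 (hlt t ht)).le
  have hends : φ q = φ p := by
    simp only [φ, α]
    field_simp [(sub_pos.2 hpq).ne']
    ring
  obtain ⟨m, hm⟩ : (Ioo p q).Nonempty := nonempty_Ioo.2 hpq
  have hconst : ∀ t ∈ Ioc m q, φ t = φ m := fun t ht => by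
    have hpm := hanti ⟨le_rfl, hpq.le⟩ (Ioo_subset_Icc_self hm) hm.1.le
    have hmt := hanti (Ioo_subset_Icc_self hm) ⟨hm.1.trans ht.1 |>.le, ht.2⟩ ht.1.le
    have htq := hanti ⟨hm.1.trans ht.1 |>.le, ht.2⟩ ⟨hpq.le, le_rfl⟩ ht.2
    linarith
  have hzero : HasDerivWithinAt φ 0 (Ioi m) m :=
    (hasDerivWithinAt_const m _ (φ m)).congr_of_eventuallyEq
      (by filter_upwards [Ioc_mem_nhdsGT hm.2] with t ht using hconst t ht) rfl
  exact (sub_neg.2 (hlt m hm)).ne ((uniqueDiffWithinAt_Ioi m).eq_deriv _ (hφ' m hm) hzero)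

lemma exists_mem_Ioo_le_div_of_hasDerivWithinAt_Iio {g g' : ℝ → ℝ} {p q : ℝ} (hpq : p < q)
    (hg : ContinuousOn g (Icc p q))
    (hg' : ∀ t ∈ Ioo p q, HasDerivWithinAt g (g' t) (Iio t) t) :
    ∃ v ∈ Ioo p q, g' v ≤ (g q - g p) / (q - p) := by
  have hreflect : ∀ t ∈ Ioo (-q) (-p),
      HasDerivWithinAt (fun s => g (-s)) (-g' (-t)) (Ioi t) t := fun t ht =>
    ((hg' (-t) ⟨lt_neg_of_lt_neg ht.2, neg_lt_of_neg_lt ht.1⟩).comp t (hasDerivWithinAt_neg t _)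
      fun s (hs : t < s) => neg_lt_neg hs).congr_deriv (mul_neg_one _)
  obtain ⟨u, hu, hle⟩ := exists_mem_Ioo_div_le_of_hasDerivWithinAt_Ioi
    (g := fun s => g (-s)) (neg_lt_neg hpq)
    (hg.comp continuousOn_neg fun t ht => ⟨le_neg_of_le_neg ht.2, neg_le_of_neg_le ht.1⟩)
    hreflect
  refine ⟨-u, ⟨lt_neg_of_lt_neg hu.2, neg_lt_of_neg_lt hu.1⟩, ?_⟩
  rw [neg_neg, neg_neg, sub_neg_eq_add, neg_add_eq_sub, ← neg_sub (g q), neg_div] at hle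
  linarith

/-- Rolle-type step in Lemma F4: if `g` lies strictly above the chord through
`(x, g x)` and `(y, g y)` at a point `z ∈ (x,y)`, then with `α, β` the slopes of the
two subchords, `α > β`, there is `u ∈ (x,z)` with right derivative `≥ α` and
`v ∈ (z,y)` with left derivative `≤ β`. -/
theorem lemF4_step (a b : ℝ) (g gl gr : ℝ → ℝ)
    (hgl : ∀ t ∈ Set.Ioo a b, HasDerivWithinAt g (gl t) (Set.Iio t) t)
    (hgr : ∀ t ∈ Set.Ioo a b, HasDerivWithinAt g (gr t) (Set.Ioi t) t)
    (x z y : ℝ) (hx : x ∈ Set.Ioo a b) (hz : z ∈ Set.Ioo a b) (hy : y ∈ Set.Ioo a b)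
    (hxz : x < z) (hzy : z < y)
    (hchord : g z > g x + (g y - g x) * (z - x) / (y - x)) :
    (g z - g x) / (z - x) > (g y - g z) / (y - z) ∧
    (∃ u ∈ Set.Ioo x z, gr u ≥ (g z - g x) / (z - x)) ∧
    (∃ v ∈ Set.Ioo z y, gl v ≤ (g y - g z) / (y - z)) := by
  have hcont : ContinuousOn g (Ioo a b) := fun t ht =>
    (continuousAt_iff_continuous_left'_right'.2
      ⟨(hgl t ht).continuousWithinAt, (hgr t ht).continuousWithinAt⟩).continuousWithinAt
  refine ⟨?_, ?_, ?_⟩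
  · have hcross : (g y - g x) * (z - x) < (g z - g x) * (y - x) := by
      rw [← div_lt_iff₀ (by linarith)]
      linarith
    rw [gt_iff_lt, div_lt_div_iff₀ (by linarith) (by linarith)]
    linarith
  · exact exists_mem_Ioo_div_le_of_hasDerivWithinAt_Ioi hxz
      (hcont.mono (Icc_subset_Ioo hx.1 hz.2))
      fun t ht => hgr t (Ioo_subset_Ioo hx.1.le hz.2.le ht)
  · exact exists_mem_Ioo_le_div_of_hasDerivWithinAt_Iio hzy
      (hcont.mono (Icc_subset_Ioo hz.1 hy.2))
      fun t ht => hgl t (Ioo_subset_Ioo hz.1.le hy.2.le ht)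
end
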